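/- Let n ≥ 3, let 0 < ρ < R, and let Ω = {x ∈ ℝⁿ : ρ < |x| < R} be a concentric spherical annulus. Let H ∈ ℝ with H ≠ 0, and let u ∈ C²(Ω) ∩ C(closure Ω) be a radially symmetric solution of the constant mean curvature equation: u(x) = w(|x|) for some function w, div(∇u/√(1+|∇u|²)) = H in Ω, and u = 0 on ∂Ω. Then the critical set K = {x ∈ Ω : ∇u(x) = 0} is exactly one closed hypersurface, namely a sphere centered at the origin: there exists c ∈ (ρ, R) such that K = {x ∈ ℝⁿ : |x| = c}. -/

import Mathlib

/-!
For `u x = w ‖x‖` the gradient is `∇u x = (w'(‖x‖) / ‖x‖) • x`, and `L u = H` becomes the ODE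
`(rⁿ⁻¹ w' / √(1 + w'²))' = H rⁿ⁻¹` on `(ρ, R)`. So the critical set is the union of the spheres
`‖x‖ = r` over the critical points `r` of `w`. Since `w ρ = w R = 0`, Rolle's theorem gives one such
`r`; and the flux `rⁿ⁻¹ w' / √(1 + w'²)`, which vanishes exactly where `w'` does, is injective on
`(ρ, R)` because its derivative `H rⁿ⁻¹` never vanishes, so there is no other.
-/

open Set Metric

noncomputable section

/-- The coefficients `a_{ij}(p) = (1+|p|²)^{-1/2}(δ_{ij} − pᵢpⱼ/(1+|p|²))`
of the mean curvature operator. -/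
def mcCoeff {n : ℕ} (p : EuclideanSpace ℝ (Fin n)) (i j : Fin n) : ℝ :=
  (Real.sqrt (1 + ‖p‖ ^ 2))⁻¹ * ((if i = j then 1 else 0) - p i * p j / (1 + ‖p‖ ^ 2))

/-- Second partial derivative `∂²u/∂xᵢ∂xⱼ`. -/
def hessEntry {n : ℕ} (u : EuclideanSpace ℝ (Fin n) → ℝ) (x : EuclideanSpace ℝ (Fin n))
    (i j : Fin n) : ℝ :=
  iteratedFDeriv ℝ 2 u x ![EuclideanSpace.single i 1, EuclideanSpace.single j 1]

/-- The Hessian matrix `D²u(x)`. -/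
def hessMatrix {n : ℕ} (u : EuclideanSpace ℝ (Fin n) → ℝ) (x : EuclideanSpace ℝ (Fin n)) :
    Matrix (Fin n) (Fin n) ℝ :=
  Matrix.of fun i j => hessEntry u x i j

/-- The mean curvature operator `L u = div(∇u/√(1+|∇u|²)) = Σ a_{ij}(∇u) ∂²u/∂xᵢ∂xⱼ`. -/
def meanCurv {n : ℕ} (u : EuclideanSpace ℝ (Fin n) → ℝ) (x : EuclideanSpace ℝ (Fin n)) : ℝ :=
  ∑ i, ∑ j, mcCoeff (gradient u x) i j * hessEntry u x i j

/-- A solution of the Dirichlet problem `L u = f(u)` in `Ω`, `u = 0` on `∂Ω`: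
`u ∈ C²(Ω) ∩ C(closure Ω)`. -/
def IsMCSolution {n : ℕ} (Ω : Set (EuclideanSpace ℝ (Fin n))) (f : ℝ → ℝ)
    (u : EuclideanSpace ℝ (Fin n) → ℝ) : Prop :=
  ContDiffOn ℝ 2 u Ω ∧ ContinuousOn u (closure Ω) ∧
    (∀ x ∈ Ω, meanCurv u x = f (u x)) ∧ (∀ x ∈ frontier Ω, u x = 0)

open Filter Topology

section Norm

variable {E : Type*} [NormedAddCommGroup E] [InnerProductSpace ℝ E] {x : E}

theorem hasFDerivAt_norm_of_ne_zero (hx : x ≠ 0) :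
    HasFDerivAt (fun y : E => ‖y‖) (‖x‖⁻¹ • innerSL ℝ x) x := by
  have hsqrt := (Real.hasDerivAt_sqrt (by positivity : ‖x‖ ^ 2 ≠ 0)).comp_hasFDerivAt x
    (hasStrictFDerivAt_norm_sq x).hasFDerivAt
  have hnorm : (fun y : E => ‖y‖) = fun y => √(‖y‖ ^ 2) := by
    ext y; rw [Real.sqrt_sq (norm_nonneg y)]
  rw [hnorm]
  refine hsqrt.congr_fderiv ?_
  ext v
  simp [Real.sqrt_sq (norm_nonneg x)]
  field_simp

theorem HasDerivAt.comp_norm {f : ℝ → ℝ} {f' : ℝ} (hf : HasDerivAt f f' ‖x‖) (hx : x ≠ 0) :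
    HasFDerivAt (fun y : E => f ‖y‖) ((f' / ‖x‖) • innerSL ℝ x) x :=
  (hf.comp_hasFDerivAt x (hasFDerivAt_norm_of_ne_zero hx)).congr_fderiv <| by
    rw [smul_smul, div_eq_mul_inv]

theorem fderiv_fderiv_apply_of_fderiv_eq_smul_innerSL {u ψ : E → ℝ} {ψ' : E →L[ℝ] ℝ}
    (hu : fderiv ℝ u =ᶠ[𝓝 x] fun y => ψ y • innerSL ℝ y) (hψ : HasFDerivAt ψ ψ' x) (v₁ v₂ : E) :
    fderiv ℝ (fderiv ℝ u) x v₁ v₂ = ψ' v₁ * inner ℝ x v₂ + ψ x * inner ℝ v₁ v₂ := by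
  have h : HasFDerivAt (fun y => ψ y • innerSL ℝ y) _ x := hψ.smul (innerSL ℝ).hasFDerivAt
  rw [hu.fderiv_eq, h.fderiv, add_comm]
  rfl

end Norm

section Radial

variable {E : Type*} [NormedAddCommGroup E] [InnerProductSpace ℝ E] {u : E → ℝ} {w : ℝ → ℝ}
  {x : E}

theorem fderiv_eventuallyEq_of_eventuallyEq_comp_norm (hu : u =ᶠ[𝓝 x] fun y => w ‖y‖)
    (hw : ∀ᶠ r in 𝓝 ‖x‖, DifferentiableAt ℝ w r) (hx : x ≠ 0) :
    fderiv ℝ u =ᶠ[𝓝 x] fun y => (deriv w ‖y‖ / ‖y‖) • innerSL ℝ y := by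
  filter_upwards [hu.eventuallyEq_nhds, continuous_norm.continuousAt.eventually hw,
    eventually_ne_nhds hx] with y huy hwy hy
  exact (hwy.hasDerivAt.comp_norm hy).congr_of_eventuallyEq huy |>.fderiv

variable [CompleteSpace E]

theorem gradient_eq_of_eventuallyEq_comp_norm (hu : u =ᶠ[𝓝 x] fun y => w ‖y‖)
    (hw : DifferentiableAt ℝ w ‖x‖) (hx : x ≠ 0) :
    gradient u x = (deriv w ‖x‖ / ‖x‖) • x := by
  refine HasGradientAt.gradient <| hasGradientAt_iff_hasFDerivAt.mpr ?_
  refine ((hw.hasDerivAt.comp_norm hx).congr_of_eventuallyEq hu).congr_fderiv ?_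
  ext v
  simp

theorem gradient_eq_zero_iff_of_eventuallyEq_comp_norm (hu : u =ᶠ[𝓝 x] fun y => w ‖y‖)
    (hw : DifferentiableAt ℝ w ‖x‖) (hx : x ≠ 0) :
    gradient u x = 0 ↔ deriv w ‖x‖ = 0 := by
  rw [gradient_eq_of_eventuallyEq_comp_norm hu hw hx, smul_eq_zero, div_eq_zero_iff]
  simp [hx]

end Radial

def radialMeanCurv (n : ℕ) (w : ℝ → ℝ) (r : ℝ) : ℝ :=
  deriv (deriv w) r / √(1 + deriv w r ^ 2) ^ 3 + (n - 1) * deriv w r / (r * √(1 + deriv w r ^ 2))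

section EuclideanSpace

variable {n : ℕ} {u : EuclideanSpace ℝ (Fin n) → ℝ} {w : ℝ → ℝ} {x : EuclideanSpace ℝ (Fin n)}

theorem sum_mcCoeff_smul_mul (x : EuclideanSpace ℝ (Fin n)) (α β : ℝ) :
    ∑ i, ∑ j, mcCoeff (α • x) i j * (β * x i * x j + α * if i = j then 1 else 0) =
      (β * ‖x‖ ^ 2 + n * α - ‖α • x‖ ^ 2 * (β * ‖x‖ ^ 2 + α) / (1 + ‖α • x‖ ^ 2)) /
        √(1 + ‖α • x‖ ^ 2) := by
  have hx := EuclideanSpace.real_norm_sq_eq x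
  have hαx : ‖α • x‖ ^ 2 = α ^ 2 * ‖x‖ ^ 2 := by
    rw [norm_smul, mul_pow, Real.norm_eq_abs, sq_abs]
  set P := 1 + ‖α • x‖ ^ 2
  have hsummand : ∀ i j, mcCoeff (α • x) i j * (β * x i * x j + α * if i = j then 1 else 0) =
      (√P)⁻¹ * ((if i = j then β * x i ^ 2 + α else 0) -
        α ^ 2 * β / P * (x i ^ 2 * x j ^ 2) - (if i = j then α ^ 3 / P * x i ^ 2 else 0)) := by
    intro i j
    rw [mcCoeff, PiLp.smul_apply, PiLp.smul_apply, smul_eq_mul, smul_eq_mul]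
    split_ifs with h
    · subst h; ring
    · ring
  simp only [hsummand, ← Finset.mul_sum, Finset.sum_sub_distrib, Finset.sum_ite_eq,
    Finset.mem_univ, if_true, ← hx, Finset.sum_add_distrib, ← Finset.sum_mul, Finset.sum_const,
    Finset.card_univ, Fintype.card_fin, nsmul_eq_mul, hαx]
  ring

theorem hessEntry_eq_of_eventuallyEq_comp_norm (hu : u =ᶠ[𝓝 x] fun y => w ‖y‖)
    (hw : ContDiffAt ℝ 2 w ‖x‖) (hx : x ≠ 0) (i j : Fin n) :
    hessEntry u x i j =
      (deriv (deriv w) ‖x‖ * ‖x‖ - deriv w ‖x‖) / ‖x‖ ^ 2 / ‖x‖ * x i * x j +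
        deriv w ‖x‖ / ‖x‖ * if i = j then 1 else 0 := by
  have hw' : DifferentiableAt ℝ (deriv w) ‖x‖ :=
    (hw.derivWithin (m := 1) (by norm_num)).differentiableAt one_ne_zero
  have hψ := (hw'.hasDerivAt.div (hasDerivAt_id ‖x‖) (norm_ne_zero_iff.mpr hx)).comp_norm hx
  rw [hessEntry, iteratedFDeriv_two_apply, fderiv_fderiv_apply_of_fderiv_eq_smul_innerSL
    (fderiv_eventuallyEq_of_eventuallyEq_comp_norm hu
      ((hw.eventually (by simp)).mono fun r hr => hr.differentiableAt (by simp)) hx) hψ]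
  simp [EuclideanSpace.inner_single_right, eq_comm]

theorem meanCurv_eq_of_eventuallyEq_comp_norm (hu : u =ᶠ[𝓝 x] fun y => w ‖y‖)
    (hw : ContDiffAt ℝ 2 w ‖x‖) (hx : x ≠ 0) :
    meanCurv u x = radialMeanCurv n w ‖x‖ := by
  have hr : ‖x‖ ≠ 0 := norm_ne_zero_iff.mpr hx
  have hgrad : ‖(deriv w ‖x‖ / ‖x‖) • x‖ ^ 2 = deriv w ‖x‖ ^ 2 := by
    rw [norm_smul, Real.norm_eq_abs, abs_div, abs_norm, div_mul_cancel₀ _ hr, sq_abs]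
  simp only [meanCurv, gradient_eq_of_eventuallyEq_comp_norm hu (hw.differentiableAt (by simp)) hx,
    hessEntry_eq_of_eventuallyEq_comp_norm hu hw hx, sum_mcCoeff_smul_mul, hgrad, radialMeanCurv]
  have hW : 0 < √(1 + deriv w ‖x‖ ^ 2) := by positivity
  field_simp
  rw [Real.sq_sqrt (by positivity)]
  ring

end EuclideanSpace

theorem Set.OrdConnected.injOn_of_hasDerivAt_ne_zero {f f' : ℝ → ℝ} {s : Set ℝ}
    (hs : s.OrdConnected) (hf : ∀ x ∈ s, HasDerivAt f (f' x) x) (hf' : ∀ x ∈ s, f' x ≠ 0) :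
    InjOn f s := by
  suffices ∀ x ∈ s, ∀ y ∈ s, x < y → f x ≠ f y by
    intro x hx y hy hxy
    by_contra hne
    rcases lt_or_gt_of_ne hne with h | h
    exacts [this x hx y hy h hxy, this y hy x hx h hxy.symm]
  intro x hx y hy hxy hfxy
  have hIcc : Icc x y ⊆ s := hs.out hx hy
  obtain ⟨c, hc, hc0⟩ := exists_hasDerivAt_eq_zero hxy
    (fun z hz => (hf z (hIcc hz)).continuousAt.continuousWithinAt) hfxy
    (fun z hz => hf z (hIcc (Ioo_subset_Icc_self hz)))
  exact hf' c (hIcc (Ioo_subset_Icc_self hc)) hc0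

/-- `rᵏ` times the radial component of `∇u / √(1 + |∇u|²)` for `u x = w ‖x‖` on `ℝᵏ⁺¹`. -/
def radialFlux (k : ℕ) (w : ℝ → ℝ) (r : ℝ) : ℝ :=
  r ^ k * deriv w r / √(1 + deriv w r ^ 2)

theorem hasDerivAt_radialFlux {k : ℕ} {w : ℝ → ℝ} {r : ℝ}
    (hw : DifferentiableAt ℝ (deriv w) r) (hr : r ≠ 0) :
    HasDerivAt (radialFlux k w) (r ^ k * radialMeanCurv (k + 1) w r) r := by
  have hq := hw.hasDerivAt
  have hpos : 0 < 1 + deriv w r ^ 2 := by positivity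
  have hW := ((hq.pow 2).const_add 1).sqrt hpos.ne'
  have h := ((hasDerivAt_pow k r).mul hq).div hW (Real.sqrt_pos.mpr hpos).ne'
  refine h.congr_deriv ?_
  have hW2 : √(1 + deriv w r ^ 2) ^ 2 = 1 + deriv w r ^ 2 := Real.sq_sqrt hpos.le
  have hk : (k : ℝ) * r ^ (k - 1) = k * r ^ k / r := by
    rcases k with _ | k
    · simp
    · field_simp; simp [pow_succ]
  simp only [radialMeanCurv, Pi.mul_apply, Pi.pow_apply, hk]
  push_cast
  field_simp
  rw [hW2]
  ring

theorem existsUnique_deriv_eq_zero_of_radialMeanCurv_eq {n : ℕ} {w : ℝ → ℝ} {ρ R H : ℝ}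
    (hn : n ≠ 0) (hρ : 0 ≤ ρ) (hρR : ρ < R) (hH : H ≠ 0) (hwc : ContinuousOn w (Icc ρ R))
    (hw : ContDiffOn ℝ 2 w (Ioo ρ R)) (hwρR : w ρ = w R)
    (hode : ∀ r ∈ Ioo ρ R, radialMeanCurv n w r = H) :
    ∃! r, r ∈ Ioo ρ R ∧ deriv w r = 0 := by
  obtain ⟨k, rfl⟩ : ∃ k, n = k + 1 := ⟨n - 1, by omega⟩
  have hw' : ∀ r ∈ Ioo ρ R, DifferentiableAt ℝ (deriv w) r := fun r hr =>
    ((hw.contDiffAt (isOpen_Ioo.mem_nhds hr)).derivWithin (m := 1) (by norm_num)).differentiableAt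
      one_ne_zero
  have hflux : InjOn (radialFlux k w) (Ioo ρ R) :=
    ordConnected_Ioo.injOn_of_hasDerivAt_ne_zero
      (fun r hr => hasDerivAt_radialFlux (hw' r hr) (hρ.trans_lt hr.1).ne')
      (fun r hr => by rw [hode r hr]; exact mul_ne_zero (pow_ne_zero _ (hρ.trans_lt hr.1).ne') hH)
  obtain ⟨r₀, hr₀, hr₀w⟩ := exists_deriv_eq_zero hρR hwc hwρR
  refine ⟨r₀, ⟨hr₀, hr₀w⟩, fun r ⟨hr, hrw⟩ => hflux hr hr₀ ?_⟩
  simp [radialFlux, hrw, hr₀w]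

def annulus {E : Type*} [Norm E] (ρ R : ℝ) : Set E := {x | ρ < ‖x‖ ∧ ‖x‖ < R}

section Annulus

variable {E : Type*} [NormedAddCommGroup E] {ρ R : ℝ}

theorem isOpen_annulus : IsOpen (annulus ρ R : Set E) :=
  (isOpen_lt continuous_const continuous_norm).inter (isOpen_lt continuous_norm continuous_const)

theorem ne_zero_of_mem_annulus {x : E} (hρ : 0 ≤ ρ) (hx : x ∈ annulus ρ R) : x ≠ 0 :=
  norm_pos_iff.mp (hρ.trans_lt hx.1)

variable [NormedSpace ℝ E] {e : E} {r : ℝ}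

theorem norm_smul_of_norm_eq_one (he : ‖e‖ = 1) (hr : 0 ≤ r) : ‖r • e‖ = r := by
  rw [norm_smul_of_nonneg hr, he, mul_one]

theorem smul_mem_annulus (he : ‖e‖ = 1) (hρ : 0 ≤ ρ) (hr : r ∈ Ioo ρ R) :
    r • e ∈ annulus ρ R := by
  show ρ < ‖r • e‖ ∧ ‖r • e‖ < R
  rwa [norm_smul_of_norm_eq_one he (hρ.trans hr.1.le)]

theorem smul_mem_closure_annulus (he : ‖e‖ = 1) (hρ : 0 ≤ ρ) (hρR : ρ < R) (hr : r ∈ Icc ρ R) :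
    r • e ∈ closure (annulus ρ R) :=
  map_mem_closure (f := fun s : ℝ => s • e) (continuous_id.smul continuous_const)
    (by rwa [closure_Ioo hρR.ne]) fun _ hs => smul_mem_annulus he hρ hs

theorem smul_mem_frontier_annulus (he : ‖e‖ = 1) (hρ : 0 ≤ ρ) (hρR : ρ < R)
    (hr : r = ρ ∨ r = R) : r • e ∈ frontier (annulus ρ R) := by
  have hrIcc : r ∈ Icc ρ R := by rcases hr with rfl | rfl <;> constructor <;> linarith
  refine ⟨smul_mem_closure_annulus he hρ hρR hrIcc, ?_⟩
  rw [isOpen_annulus.interior_eq]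
  show ¬(ρ < ‖r • e‖ ∧ ‖r • e‖ < R)
  rw [norm_smul_of_norm_eq_one he (hρ.trans hrIcc.1)]
  rcases hr with rfl | rfl <;> simp

variable {u : E → ℝ} {w : ℝ → ℝ}

theorem Set.EqOn.apply_smul_of_norm_eq_one {s : Set E} (hrad : EqOn u (fun x => w ‖x‖) s)
    (he : ‖e‖ = 1) (hr : 0 ≤ r) (hs : r • e ∈ s) : u (r • e) = w r := by
  rw [hrad hs]
  exact congrArg w (norm_smul_of_norm_eq_one he hr)

variable [Nontrivial E]

theorem contDiffOn_Ioo_of_eqOn_comp_norm {k : WithTop ℕ∞} (hρ : 0 ≤ ρ)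
    (hu : ContDiffOn ℝ k u (annulus ρ R)) (hrad : EqOn u (fun x => w ‖x‖) (annulus ρ R)) :
    ContDiffOn ℝ k w (Ioo ρ R) := by
  obtain ⟨e, he⟩ := exists_norm_eq E zero_le_one
  refine (hu.comp (contDiff_id.smul contDiff_const).contDiffOn
    fun r hr => smul_mem_annulus he hρ hr).congr fun r hr => ?_
  exact (hrad.apply_smul_of_norm_eq_one he (hρ.trans hr.1.le) (smul_mem_annulus he hρ hr)).symm

theorem continuousOn_Icc_of_eqOn_comp_norm (hρ : 0 ≤ ρ) (hρR : ρ < R)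
    (hu : ContinuousOn u (closure (annulus ρ R)))
    (hrad : EqOn u (fun x => w ‖x‖) (closure (annulus ρ R))) :
    ContinuousOn w (Icc ρ R) := by
  obtain ⟨e, he⟩ := exists_norm_eq E zero_le_one
  refine (hu.comp (continuous_id.smul continuous_const).continuousOn
    fun r hr => smul_mem_closure_annulus he hρ hρR hr).congr fun r hr => ?_
  exact (hrad.apply_smul_of_norm_eq_one he (hρ.trans hr.1)
    (smul_mem_closure_annulus he hρ hρR hr)).symm

theorem eq_zero_of_eqOn_comp_norm_of_frontier (hρ : 0 ≤ ρ) (hρR : ρ < R)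
    (hrad : EqOn u (fun x => w ‖x‖) (closure (annulus ρ R)))
    (hbdry : ∀ x ∈ frontier (annulus ρ R), u x = 0) (hr : r = ρ ∨ r = R) : w r = 0 := by
  obtain ⟨e, he⟩ := exists_norm_eq E zero_le_one
  have hfr := smul_mem_frontier_annulus he hρ hρR hr
  have hr₀ : 0 ≤ r := by rcases hr with rfl | rfl <;> linarith
  rw [← hrad.apply_smul_of_norm_eq_one he hr₀ (frontier_subset_closure hfr), hbdry _ hfr]

end Annulus

/-- In a concentric spherical annulus of `ℝⁿ` (`n ≥ 3`), the critical set
of a radially symmetric solution of the constant mean curvature equation `L u = H`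
(`H ≠ 0`) with zero Dirichlet data is exactly one sphere centered at the origin. -/
theorem critical_set_concentric_annulus
    (n : ℕ) (hn : 3 ≤ n) (ρ R : ℝ) (hρ : 0 < ρ) (hρR : ρ < R)
    (Ω : Set (EuclideanSpace ℝ (Fin n)))
    (hΩ : Ω = {x : EuclideanSpace ℝ (Fin n) | ρ < ‖x‖ ∧ ‖x‖ < R})
    (H : ℝ) (hH : H ≠ 0)
    (u : EuclideanSpace ℝ (Fin n) → ℝ)
    (huC2 : ContDiffOn ℝ 2 u Ω) (huC : ContinuousOn u (closure Ω))
    (w : ℝ → ℝ) (hrad : ∀ x ∈ closure Ω, u x = w ‖x‖)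
    (hu : ∀ x ∈ Ω, meanCurv u x = H)
    (hbdry : ∀ x ∈ frontier Ω, u x = 0) :
    ∃ c ∈ Set.Ioo ρ R,
      {x | x ∈ Ω ∧ gradient u x = 0} = {x : EuclideanSpace ℝ (Fin n) | ‖x‖ = c} := by
  obtain ⟨m, rfl⟩ : ∃ m, n = m + 1 := ⟨n - 1, by omega⟩
  obtain rfl : Ω = annulus ρ R := hΩ
  have hradΩ : EqOn u (fun x => w ‖x‖) (annulus ρ R) := fun x hx => hrad x (subset_closure hx)
  have hw := contDiffOn_Ioo_of_eqOn_comp_norm hρ.le huC2 hradΩ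
  have hloc : ∀ x ∈ annulus ρ R,
      x ≠ 0 ∧ ContDiffAt ℝ 2 w ‖x‖ ∧ u =ᶠ[𝓝 x] fun y => w ‖y‖ := fun x hx =>
    ⟨ne_zero_of_mem_annulus hρ.le hx, hw.contDiffAt (isOpen_Ioo.mem_nhds hx),
      eventuallyEq_of_mem (isOpen_annulus.mem_nhds hx) hradΩ⟩
  have hcrit : ∀ x ∈ annulus ρ R, gradient u x = 0 ↔ deriv w ‖x‖ = 0 := fun x hx =>
    let ⟨hx0, hwx, hux⟩ := hloc x hx
    gradient_eq_zero_iff_of_eventuallyEq_comp_norm hux (hwx.differentiableAt (by simp)) hx0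
  have hode : ∀ r ∈ Ioo ρ R, radialMeanCurv (m + 1) w r = H := fun r hr => by
    obtain ⟨x, rfl⟩ := exists_norm_eq (EuclideanSpace ℝ (Fin (m + 1))) (hρ.le.trans hr.1.le)
    obtain ⟨hx0, hwx, hux⟩ := hloc x hr
    rw [← meanCurv_eq_of_eventuallyEq_comp_norm hux hwx hx0, hu x hr]
  have hwρR : w ρ = w R := by
    rw [eq_zero_of_eqOn_comp_norm_of_frontier hρ.le hρR hrad hbdry (.inl rfl),
      eq_zero_of_eqOn_comp_norm_of_frontier hρ.le hρR hrad hbdry (.inr rfl)]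
  obtain ⟨r₀, ⟨hr₀, hr₀w⟩, huniq⟩ := existsUnique_deriv_eq_zero_of_radialMeanCurv_eq
    m.succ_ne_zero hρ.le hρR hH (continuousOn_Icc_of_eqOn_comp_norm hρ.le hρR huC hrad) hw
    hwρR hode
  refine ⟨r₀, hr₀, Set.ext fun x => ⟨fun ⟨hx, hgx⟩ => huniq _ ⟨hx, (hcrit x hx).1 hgx⟩, ?_⟩⟩
  rintro (rfl : ‖x‖ = r₀)
  exact ⟨hr₀, (hcrit x hr₀).2 hr₀w⟩
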